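/- Let G₁ be a telescopic group and G₂ a group possessing a finite-index subgroup H₂ with N_{G₂}(H₂) = H₂ (self-normalizing of finite index). Then the direct product G₁ × G₂ is telescopic. -/

import Mathlib

/-- A group `T` is telescopic if every finite group is realised as `N_T(H)/H`
for some finite-index subgroup `H ≤ T`. -/
def IsTelescopic (T : Type*) [Group T] : Prop :=
  ∀ (Γ : Type) [Group Γ] [Finite Γ],
    ∃ H : Subgroup T, H.FiniteIndex ∧
      Nonempty ((Subgroup.normalizer (H : Set T) ⧸ H.subgroupOf (Subgroup.normalizer (H : Set T))) ≃* Γ)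

/-!
Normalizers of product subgroups split, `N(H₁ × H₂) = N(H₁) × N(H₂)`, hence so do the quotients:
`N(H₁ × H₂)/(H₁ × H₂) ≅ N(H₁)/H₁ × N(H₂)/H₂`. If `H₂` is self-normalizing the second factor is
trivial, so `H₁ × H₂` realises the same finite group as `H₁`, and it has finite index when both
factors do.
-/

namespace Subgroup

variable {G G₁ G₂ : Type*} [Group G] [Group G₁] [Group G₂]

instance finiteIndex_prod (H₁ : Subgroup G₁) (H₂ : Subgroup G₂) [H₁.FiniteIndex]
    [H₂.FiniteIndex] : (H₁.prod H₂).FiniteIndex := by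
  simp_all [finiteIndex_iff, index_prod]

abbrev weylGroup (H : Subgroup G) : Type _ :=
  normalizer (H : Set G) ⧸ H.subgroupOf (normalizer (H : Set G))

theorem normalizer_prod (H₁ : Subgroup G₁) (H₂ : Subgroup G₂) :
    normalizer ((H₁.prod H₂ : Subgroup (G₁ × G₂)) : Set (G₁ × G₂)) =
      (normalizer (H₁ : Set G₁)).prod (normalizer (H₂ : Set G₂)) := by
  ext ⟨a, b⟩
  simp only [mem_normalizer_iff, mem_prod, Prod.forall, Prod.mk_mul_mk, Prod.inv_mk]
  refine ⟨fun h => ⟨fun x => by simpa using h x 1, fun y => by simpa using h 1 y⟩, ?_⟩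
  rintro ⟨ha, hb⟩ x y
  rw [ha x, hb y]

def normalizerProdEquiv (H₁ : Subgroup G₁) (H₂ : Subgroup G₂) :
    normalizer ((H₁.prod H₂ : Subgroup (G₁ × G₂)) : Set (G₁ × G₂)) ≃*
      normalizer (H₁ : Set G₁) × normalizer (H₂ : Set G₂) :=
  (MulEquiv.subgroupCongr (normalizer_prod H₁ H₂)).trans (prodEquiv _ _)

theorem map_normalizerProdEquiv_subgroupOf (H₁ : Subgroup G₁) (H₂ : Subgroup G₂) :
    ((H₁.prod H₂).subgroupOf
        (normalizer ((H₁.prod H₂ : Subgroup (G₁ × G₂)) : Set (G₁ × G₂)))).map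
        (normalizerProdEquiv H₁ H₂ : _ →* _) =
      (H₁.subgroupOf (normalizer (H₁ : Set G₁))).prod
        (H₂.subgroupOf (normalizer (H₂ : Set G₂))) := by
  rw [map_equiv_eq_comap_symm]
  rfl

def weylGroupProdEquiv (H₁ : Subgroup G₁) (H₂ : Subgroup G₂) :
    (H₁.prod H₂).weylGroup ≃* H₁.weylGroup × H₂.weylGroup :=
  (QuotientGroup.congr _ _ _ (map_normalizerProdEquiv_subgroupOf H₁ H₂)).trans
    (QuotientGroup.prodMulEquiv _ _)

theorem subsingleton_weylGroup_of_normalizer_eq (H : Subgroup G)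
    (h : normalizer (H : Set G) = H) : Subsingleton H.weylGroup := by
  rw [weylGroup, subgroupOf_eq_top.mpr h.le]
  exact QuotientGroup.subsingleton_quotient_top

end Subgroup

/-- If `G₁` is telescopic and `G₂` has a self-normalizing finite-index subgroup,
then `G₁ × G₂` is telescopic. -/
theorem isTelescopic_prod {G₁ G₂ : Type*} [Group G₁] [Group G₂]
    (h₁ : IsTelescopic G₁) (H₂ : Subgroup G₂) (hfi : H₂.FiniteIndex)
    (hself : Subgroup.normalizer (H₂ : Set G₂) = H₂) :
    IsTelescopic (G₁ × G₂) := by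
  intro Γ _ _
  obtain ⟨H₁, hH₁, ⟨e⟩⟩ := h₁ Γ
  have := H₂.subsingleton_weylGroup_of_normalizer_eq hself
  let : Unique H₂.weylGroup := uniqueOfSubsingleton 1
  exact ⟨H₁.prod H₂, inferInstance,
    ⟨(H₁.weylGroupProdEquiv H₂).trans (MulEquiv.prodUnique.trans e)⟩⟩
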